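/- arXiv:2111.13238 — 4 statements merged into one kernel-verified Lean document; each statement's English description precedes it below -/
import Mathlib

section
/- Let G be a finite connected graph and S a maximal independent set in G. Define the MIS-derived graph on vertex set S by joining x,y ∈ S when 0 < d_G(x,y) ≤ 3. Then the MIS-derived graph is connected. -/
open SimpleGraph

/-- The MIS-derived graph: vertices are the elements of `S`, and `x, y ∈ S` are
joined when `0 < d_G(x,y) ≤ 3`. -/
def misGraph {V : Type*} (G : SimpleGraph V) (S : Set V) : SimpleGraph S where
  Adj x y := 0 < G.dist x y ∧ G.dist x y ≤ 3
  symm := by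
    constructor
    intro x y h
    rwa [SimpleGraph.dist_comm]
  loopless := by
    constructor
    intro x h
    simp [SimpleGraph.dist_self] at h

/-!
Every vertex lies within distance 1 of `S`. If `x, y ∈ S` are at distance `d > 3`, let `w` be the
vertex at distance 2 from `x` on a geodesic to `y`, and `s ∈ S` a vertex with `d(w, s) ≤ 1`. Then
`0 < d(x, s) ≤ 3` and `d(s, y) ≤ d - 1`, so `x` is adjacent in the derived graph to a vertex of `S`
strictly closer to `y`, and induction on `d` connects `x` to `y`.
-/

namespace SimpleGraph

variable {V : Type*} {G : SimpleGraph V}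

lemma Reachable.exists_dist_le_dist_le_sub {u v : V} (h : G.Reachable u v) (k : ℕ) :
    ∃ w, G.dist u w ≤ k ∧ G.dist w v ≤ G.dist u v - k := by
  obtain ⟨p, hp⟩ := h.exists_walk_length_eq_dist
  refine ⟨p.getVert k, (dist_le (p.take k)).trans ?_, (dist_le (p.drop k)).trans ?_⟩
  · simp
  · simp [hp]

lemma exists_mem_dist_le_one {S : Set V} (hS : ∀ v ∉ S, ∃ s ∈ S, G.Adj v s) (v : V) :
    ∃ s ∈ S, G.dist v s ≤ 1 := by
  by_cases hv : v ∈ S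
  · exact ⟨v, hv, by simp⟩
  · obtain ⟨s, hs, hvs⟩ := hS v hv
    exact ⟨s, hs, (dist_eq_one_iff_adj.mpr hvs).le⟩

lemma Connected.exists_mem_dist_le_three_dist_lt {S : Set V} (hG : G.Connected)
    (hS : ∀ v, ∃ s ∈ S, G.dist v s ≤ 1) {x y : V} (hxy : 3 < G.dist x y) :
    ∃ s ∈ S, 0 < G.dist x s ∧ G.dist x s ≤ 3 ∧ G.dist s y < G.dist x y := by
  obtain ⟨w, hxw, hwy⟩ := (hG x y).exists_dist_le_dist_le_sub 2
  obtain ⟨s, hs, hws⟩ := hS w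
  have hxs := hG.dist_triangle (u := x) (v := w) (w := s)
  have hsy := hG.dist_triangle (u := s) (v := w) (w := y)
  have hxy' := hG.dist_triangle (u := x) (v := s) (w := y)
  have hsw : G.dist s w = G.dist w s := dist_comm
  exact ⟨s, hs, by omega, by omega, by omega⟩

lemma Connected.misGraph_reachable {S : Set V} (hG : G.Connected)
    (hS : ∀ v, ∃ s ∈ S, G.dist v s ≤ 1) (x y : S) : (misGraph G S).Reachable x y := by
  induction hd : G.dist x y using Nat.strong_induction_on generalizing x with
  | _ d ih =>
    rcases Nat.eq_zero_or_pos d with rfl | hpos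
    · rw [Subtype.ext ((hG.dist_eq_zero_iff).mp hd)]
    by_cases hd3 : d ≤ 3
    · exact Adj.reachable ⟨hd ▸ hpos, hd ▸ hd3⟩
    obtain ⟨s, hs, hxs, hxs3, hsy⟩ :=
      hG.exists_mem_dist_le_three_dist_lt hS (x := x) (y := y) (by omega)
    exact (Adj.reachable (G := misGraph G S) (v := ⟨s, hs⟩) ⟨hxs, hxs3⟩).trans
      (ih _ (hd ▸ hsy) ⟨s, hs⟩ rfl)

end SimpleGraph

theorem misGraph_connected_general {V : Type*} (G : SimpleGraph V)
    (hG : G.Connected) (S : Set V)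
    (hmax : ∀ v : V, v ∉ S → ∃ w ∈ S, G.Adj v w) :
    (misGraph G S).Connected := by
  have hS := exists_mem_dist_le_one hmax
  obtain ⟨v⟩ := hG.nonempty
  obtain ⟨s, hs, -⟩ := hS v
  have : Nonempty S := ⟨⟨s, hs⟩⟩
  exact ⟨hG.misGraph_reachable hS⟩

/-- The MIS-derived graph of a maximal independent set in a finite connected
graph is connected. -/
theorem misGraph_connected {V : Type*} [Fintype V] (G : SimpleGraph V)
    (hG : G.Connected) (S : Set V)
    (hind : ∀ x ∈ S, ∀ y ∈ S, ¬ G.Adj x y)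
    (hmax : ∀ v : V, v ∉ S → ∃ w ∈ S, G.Adj v w) :
    (misGraph G S).Connected :=
  misGraph_connected_general G hG S hmax
end

section
/- Let G be a finite connected graph with center C_G satisfying the uniform eccentricity property: d_G(C_G, v) = ecc_G(v) − rad(G) for all v ∈ G. Let φ : G → H be a surjective map satisfying (1/A)·d_G(x,y) − B ≤ d_H(φ(x),φ(y)) ≤ A·d_G(x,y) + B for all x,y. Then the center-shift d_G(C_G, φ⁻¹(C_H)) is at most (A − 1/A)·rad(H) + A·B + B/A. -/
open SimpleGraph

/-- The eccentricity of a vertex: the maximum distance to any vertex. -/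
noncomputable def ecc {V : Type*} [Fintype V] (G : SimpleGraph V) (v : V) : ℕ :=
  Finset.univ.sup (fun u => G.dist v u)

/-- The radius: the minimum eccentricity. -/
noncomputable def grad {V : Type*} [Fintype V] (G : SimpleGraph V) : ℕ :=
  sInf {n : ℕ | ∃ v : V, ecc G v = n}

/-- The center: the set of vertices of minimum eccentricity. -/
noncomputable def center {V : Type*} [Fintype V] (G : SimpleGraph V) : Set V :=
  {v : V | ecc G v = grad G}

/-- The center-shift of a surjective map `φ : G → H`: the minimum `G`-distance
between a center vertex of `G` and a preimage of a center vertex of `H`. -/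
noncomputable def centerShift {V W : Type*} [Fintype V] [Fintype W]
    (G : SimpleGraph V) (H : SimpleGraph W) (φ : V → W) : ℕ :=
  sInf {n : ℕ | ∃ u v : V, u ∈ _root_.center G ∧ φ v ∈ _root_.center H ∧ G.dist u v = n}

/-!
Pick a center vertex `w` of `H` and a preimage `v`. By uniform eccentricity the center-shift is at
most `ecc v - rad G`. The lower quasi-isometry bound gives `ecc v ≤ A (ecc w + B) = A (rad H + B)`,
while the upper bound, applied at a center vertex of `G` and using surjectivity to reach every
vertex of `H`, gives `rad H ≤ A rad G + B`. Eliminating `rad G` yields the claimed bound.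
-/

section Eccentricity

variable {V W : Type*} [Fintype V] [Fintype W] {G : SimpleGraph V} {H : SimpleGraph W}

theorem dist_le_ecc (v u : V) : G.dist v u ≤ ecc G v :=
  Finset.le_sup (Finset.mem_univ u)

theorem exists_dist_eq_ecc (v : V) : ∃ u, G.dist v u = ecc G v := by
  obtain ⟨u, -, hu⟩ := Finset.exists_mem_eq_sup Finset.univ ⟨v, Finset.mem_univ v⟩ (G.dist v)
  exact ⟨u, hu.symm⟩

theorem grad_le_ecc (v : V) : grad G ≤ ecc G v :=
  Nat.sInf_le ⟨v, rfl⟩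

theorem nonempty_center [Nonempty V] : (_root_.center G).Nonempty :=
  Nat.sInf_mem (⟨_, Classical.arbitrary V, rfl⟩ : {n : ℕ | ∃ v : V, ecc G v = n}.Nonempty)

theorem exists_mem_center_dist_eq_sInf [Nonempty V] (v : V) :
    ∃ c ∈ _root_.center G, G.dist c v = sInf {n : ℕ | ∃ c ∈ _root_.center G, G.dist c v = n} := by
  obtain ⟨c, hc⟩ := nonempty_center (G := G)
  exact Nat.sInf_mem (s := {n : ℕ | ∃ c ∈ _root_.center G, G.dist c v = n}) ⟨_, c, hc, rfl⟩

theorem centerShift_le_dist {φ : V → W} {c v : V} (hc : c ∈ _root_.center G)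
    (hv : φ v ∈ _root_.center H) : centerShift G H φ ≤ G.dist c v :=
  Nat.sInf_le ⟨c, v, hc, hv, rfl⟩

theorem ecc_le_of_le_dist_map {A B : ℝ} (hA : 0 < A) {φ : V → W}
    (hφ : ∀ x y : V, (1 / A) * G.dist x y - B ≤ (H.dist (φ x) (φ y) : ℝ)) (v : V) :
    (ecc G v : ℝ) ≤ A * (ecc H (φ v) + B) := by
  obtain ⟨x, hx⟩ := exists_dist_eq_ecc (G := G) v
  have hxH : (H.dist (φ v) (φ x) : ℝ) ≤ ecc H (φ v) := by exact_mod_cast dist_le_ecc _ _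
  have hlow := hφ v x
  rw [hx, one_div_mul_eq_div, sub_le_iff_le_add, div_le_iff₀ hA] at hlow
  nlinarith

theorem ecc_map_le_of_dist_map_le {A B : ℝ} (hA : 0 ≤ A) {φ : V → W}
    (hsurj : Function.Surjective φ)
    (hφ : ∀ x y : V, (H.dist (φ x) (φ y) : ℝ) ≤ A * G.dist x y + B) (v : V) :
    (ecc H (φ v) : ℝ) ≤ A * ecc G v + B := by
  obtain ⟨w, hw⟩ := exists_dist_eq_ecc (G := H) (φ v)
  obtain ⟨y, rfl⟩ := hsurj w
  have hy : (G.dist v y : ℝ) ≤ ecc G v := by exact_mod_cast dist_le_ecc v y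
  rw [← hw]
  nlinarith [hφ v y]

end Eccentricity

theorem centerShift_le_two_sided_general {V W : Type*} [Fintype V] [Fintype W]
    (G : SimpleGraph V) (H : SimpleGraph W)
    (hG : G.Connected)
    (huniecc : ∀ v : V, sInf {n : ℕ | ∃ c ∈ _root_.center G, G.dist c v = n} =
      ecc G v - grad G)
    (A B : ℝ) (hA : 1 ≤ A)
    (φ : V → W) (hsurj : Function.Surjective φ)
    (hQ1 : ∀ x y : V, (1 / A) * G.dist x y - B ≤ (H.dist (φ x) (φ y) : ℝ) ∧
        (H.dist (φ x) (φ y) : ℝ) ≤ A * G.dist x y + B) :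
    (centerShift G H φ : ℝ) ≤ (A - 1 / A) * grad H + A * B + B / A := by
  have hA0 : 0 < A := one_pos.trans_le hA
  have : Nonempty V := hG.nonempty
  obtain ⟨c₀, hc₀⟩ := nonempty_center (G := G)
  have : Nonempty W := ⟨φ c₀⟩
  obtain ⟨w, hw⟩ := nonempty_center (G := H)
  obtain ⟨v, rfl⟩ := hsurj w
  obtain ⟨c, hc, hcv⟩ := exists_mem_center_dist_eq_sInf (G := G) v
  have hshift : (centerShift G H φ : ℝ) ≤ ecc G v - grad G := by
    rw [← Nat.cast_sub (grad_le_ecc v), ← huniecc, ← hcv]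
    exact_mod_cast centerShift_le_dist hc hw
  have hecc : (ecc G v : ℝ) ≤ A * (grad H + B) := by
    have hw' : ecc H (φ v) = grad H := hw
    simpa only [hw'] using ecc_le_of_le_dist_map hA0 (fun x y => (hQ1 x y).1) v
  have hrad : (grad H : ℝ) ≤ A * grad G + B := calc
    (grad H : ℝ) ≤ ecc H (φ c₀) := by exact_mod_cast grad_le_ecc _
    _ ≤ A * ecc G c₀ + B := ecc_map_le_of_dist_map_le hA0.le hsurj (fun x y => (hQ1 x y).2) c₀
    _ = A * grad G + B := by rw [hc₀]
  have hradG : ((grad H : ℝ) - B) / A ≤ grad G := by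
    rw [div_le_iff₀ hA0]
    linarith
  have hrhs : (A - 1 / A) * grad H + A * B + B / A = A * (grad H + B) - (grad H - B) / A := by
    field_simp
    ring
  linarith

/-- If `G` satisfies the uniform eccentricity property and `φ : G → H` is a
surjective `(A,B,C)`-quasi-isometry, then the center-shift is at most
`(A - 1/A)·rad(H) + A·B + B/A`. -/
theorem centerShift_le_two_sided {V W : Type*} [Fintype V] [Fintype W]
    (G : SimpleGraph V) (H : SimpleGraph W)
    (hG : G.Connected) (hH : H.Connected)
    (huniecc : ∀ v : V, sInf {n : ℕ | ∃ c ∈ _root_.center G, G.dist c v = n} =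
      ecc G v - grad G)
    (A B : ℝ) (hA : 1 ≤ A) (hB : 0 ≤ B)
    (φ : V → W) (hsurj : Function.Surjective φ)
    (hQ1 : ∀ x y : V, (1 / A) * G.dist x y - B ≤ (H.dist (φ x) (φ y) : ℝ) ∧
        (H.dist (φ x) (φ y) : ℝ) ≤ A * G.dist x y + B) :
    (centerShift G H φ : ℝ) ≤ (A - 1 / A) * grad H + A * B + B / A :=
  centerShift_le_two_sided_general G H hG huniecc A B hA φ hsurj hQ1
end

section
/- Let the path-graph P_n be partitioned into k consecutive intervals of sizes w[1],…,w[k] (an integer composition of n). Let σ be the sum of w[i] over the center indices of the composition ({(k+1)/2} if k odd, {k/2, k/2+1} if k even), λ the sum over smaller indices, and ρ the sum over larger indices. Then the center-shift of the quotient map P_n → P_k is 0 if σ ≥ |λ − ρ|, and equals ⌈(|λ − ρ| − σ)/2⌉ otherwise. -/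
/-- A downward-closed subset of `Fin n` is an initial segment. -/
lemma initseg_mem_iff {n : ℕ} (S : Finset (Fin n))
    (hS : ∀ ⦃j j' : Fin n⦄, j' ≤ j → j ∈ S → j' ∈ S) (j : Fin n) :
    j ∈ S ↔ (j : ℕ) < S.card := by
  constructor
  · intro hj
    have h1 : Finset.Iic j ⊆ S := fun x hx => hS (Finset.mem_Iic.mp hx) hj
    have h2 := Finset.card_le_card h1
    rw [Fin.card_Iic] at h2
    omega
  · intro hj
    by_contra hjS
    have h1 : S ⊆ Finset.Iio j := by
      intro x hx
      rw [Finset.mem_Iio]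
      by_contra hx'
      exact hjS (hS (le_of_not_gt hx') hx)
    have h2 := Finset.card_le_card h1
    rw [Fin.card_Iio] at h2
    omega

/-- Center-shift for a partition of the path graph `P_n` into `k` consecutive
intervals of sizes `w 0, …, w (k-1)` (an integer composition of `n`), encoded
by a monotone quotient map `g : Fin n → Fin k` whose fibers have the sizes
`w i`.  Vertices of `P_n` are `0, …, n-1`; the center of `P_n` is
`{(n-1)/2, n/2}` and the set of center indices of the composition is
`{(k-1)/2, k/2}` (0-indexed).  With `σ` the center-sum, `λ` the left-sum and
`ρ` the right-sum, the center-shift is `0` if `σ ≥ |λ − ρ|`, and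
`⌈(|λ − ρ| − σ)/2⌉` otherwise. -/
theorem path_partition_center_shift (n k : ℕ) (hn : 0 < n) (hk : 0 < k)
    (w : Fin k → ℕ) (hw : ∀ i, 0 < w i) (hsum : ∑ i, w i = n)
    (g : Fin n → Fin k) (hmono : Monotone g)
    (hfib : ∀ i : Fin k, (Finset.univ.filter (fun j : Fin n => g j = i)).card = w i) :
    let σ : ℕ := ∑ i ∈ Finset.univ.filter
      (fun i : Fin k => (i : ℕ) = (k - 1) / 2 ∨ (i : ℕ) = k / 2), w i
    let lam : ℕ := ∑ i ∈ Finset.univ.filter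
      (fun i : Fin k => (i : ℕ) < (k - 1) / 2), w i
    let rho : ℕ := ∑ i ∈ Finset.univ.filter
      (fun i : Fin k => k / 2 < (i : ℕ)), w i
    sInf {m : ℕ | ∃ u v : Fin n,
        ((u : ℕ) = (n - 1) / 2 ∨ (u : ℕ) = n / 2) ∧
        ((g v : ℕ) = (k - 1) / 2 ∨ (g v : ℕ) = k / 2) ∧
        Nat.dist (u : ℕ) (v : ℕ) = m} =
      if Nat.dist lam rho ≤ σ then 0 else (Nat.dist lam rho - σ + 1) / 2 := by
  intro σ lam rho
  have hdist : ∀ a b : ℕ, Nat.dist a b = a - b + (b - a) := fun a b => rfl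
  -- step A: cardinality of sublevel sets of g
  have stepA : ∀ m : ℕ, (Finset.univ.filter (fun j : Fin n => (g j : ℕ) < m)).card
      = ∑ i ∈ Finset.univ.filter (fun i : Fin k => (i : ℕ) < m), w i := by
    intro m
    rw [Finset.card_eq_sum_card_fiberwise
      (f := g) (t := Finset.univ.filter (fun i : Fin k => (i : ℕ) < m))
      (fun x hx => by simpa using (Finset.mem_filter.mp hx).2)]
    apply Finset.sum_congr rfl
    intro i hi
    rw [← hfib i]
    congr 1
    ext j
    simp only [Finset.mem_filter, Finset.mem_univ, true_and]
    constructor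
    · rintro ⟨-, h⟩; exact h
    · rintro h
      exact ⟨by rw [h]; exact (Finset.mem_filter.mp hi).2, h⟩
  -- key: monotone fiber characterization
  have key : ∀ (m : ℕ) (j : Fin n), (g j : ℕ) < m ↔
      (j : ℕ) < ∑ i ∈ Finset.univ.filter (fun i : Fin k => (i : ℕ) < m), w i := by
    intro m j
    rw [← stepA m]
    have hdown : ∀ ⦃a b : Fin n⦄, b ≤ a →
        a ∈ Finset.univ.filter (fun j : Fin n => (g j : ℕ) < m) →
        b ∈ Finset.univ.filter (fun j : Fin n => (g j : ℕ) < m) := by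
      intro a b hba ha
      simp only [Finset.mem_filter, Finset.mem_univ, true_and] at ha ⊢
      exact lt_of_le_of_lt (hmono hba) ha
    have := initseg_mem_iff _ hdown j
    simpa using this
  have hlamdef : lam = ∑ i ∈ Finset.univ.filter
      (fun i : Fin k => (i : ℕ) < (k - 1) / 2), w i := rfl
  -- split: sum over i < k/2 + 1 equals lam + σ
  have hsplit : ∑ i ∈ Finset.univ.filter (fun i : Fin k => (i : ℕ) < k / 2 + 1), w i
      = lam + σ := by
    rw [← Finset.sum_filter_add_sum_filter_not
      (Finset.univ.filter (fun i : Fin k => (i : ℕ) < k / 2 + 1))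
      (fun i : Fin k => (i : ℕ) < (k - 1) / 2) w]
    congr 1
    · congr 1
      ext i
      simp only [Finset.mem_filter, Finset.mem_univ, true_and]
      omega
    · congr 1
      ext i
      simp only [Finset.mem_filter, Finset.mem_univ, true_and]
      omega
  -- total
  have htotal : lam + σ + rho = n := by
    rw [← hsum, ← Finset.sum_filter_add_sum_filter_not
      (Finset.univ : Finset (Fin k)) (fun i : Fin k => (i : ℕ) < k / 2 + 1) w]
    rw [hsplit]
    congr 1
    refine Finset.sum_congr ?_ (fun _ _ => rfl)
    ext i
    simp only [Finset.mem_filter, Finset.mem_univ, true_and, not_lt]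
    omega
  -- σ is positive
  have hσpos : 0 < σ := by
    have hc1 : (k - 1) / 2 < k := by omega
    have hmem : (⟨(k - 1) / 2, hc1⟩ : Fin k) ∈ Finset.univ.filter
        (fun i : Fin k => (i : ℕ) = (k - 1) / 2 ∨ (i : ℕ) = k / 2) := by
      simp
    have h1 := Finset.single_le_sum (f := w) (fun i _ => Nat.zero_le _) hmem
    have h2 := hw ⟨(k - 1) / 2, hc1⟩
    omega
  -- characterization (a): center-fiber vertices lie in [lam, lam+σ)
  have hva : ∀ v : Fin n, ((g v : ℕ) = (k - 1) / 2 ∨ (g v : ℕ) = k / 2) →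
      lam ≤ (v : ℕ) ∧ (v : ℕ) < lam + σ := by
    intro v hv
    have h1 := key ((k - 1) / 2) v
    have h2 := key (k / 2 + 1) v
    rw [hsplit] at h2
    rw [← hlamdef] at h1
    constructor
    · by_contra h
      have : (v : ℕ) < lam := by omega
      have := h1.mpr this
      omega
    · exact h2.mp (by omega)
  -- characterization (b): vertices in [lam, lam+σ) are in center fibers
  have hvb : ∀ (t : ℕ) (ht : t < n), lam ≤ t → t < lam + σ →
      ((g ⟨t, ht⟩ : ℕ) = (k - 1) / 2 ∨ (g ⟨t, ht⟩ : ℕ) = k / 2) := by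
    intro t ht h1 h2
    have k1 := key ((k - 1) / 2) ⟨t, ht⟩
    have k2 := key (k / 2 + 1) ⟨t, ht⟩
    rw [hsplit] at k2
    rw [← hlamdef] at k1
    have hb1 : ¬ ((g ⟨t, ht⟩ : ℕ) < (k - 1) / 2) := fun h => by
      have := k1.mp h; simp at this; omega
    have hb2 : (g ⟨t, ht⟩ : ℕ) < k / 2 + 1 := k2.mpr (by simpa using h2)
    omega
  -- witnesses for membership
  have hwit : ∃ u0 t0 : ℕ, u0 < n ∧ lam ≤ t0 ∧ t0 < lam + σ ∧
      (u0 = (n - 1) / 2 ∨ u0 = n / 2) ∧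
      Nat.dist u0 t0 =
        (if Nat.dist lam rho ≤ σ then 0 else (Nat.dist lam rho - σ + 1) / 2) := by
    rcases le_or_gt (Nat.dist lam rho) σ with hc | hc
    · rw [if_pos hc]
      rw [hdist] at hc
      rcases lt_or_ge (n / 2) (lam + σ) with h | h
      · exact ⟨n / 2, n / 2, by omega, by omega, h, Or.inr rfl, by rw [hdist]; omega⟩
      · exact ⟨(n - 1) / 2, (n - 1) / 2, by omega, by omega, by omega, Or.inl rfl,
          by rw [hdist]; omega⟩
    · rw [if_neg (not_le.mpr hc)]
      rw [hdist] at hc ⊢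
      rcases lt_or_ge (n / 2) lam with h | h
      · exact ⟨n / 2, lam, by omega, le_refl _, by omega, Or.inr rfl, by rw [hdist]; omega⟩
      · have h2 : lam + σ ≤ (n - 1) / 2 := by omega
        exact ⟨(n - 1) / 2, lam + σ - 1, by omega, by omega, by omega, Or.inl rfl,
          by rw [hdist]; omega⟩
  obtain ⟨u0, t0, hu0n, ht0a, ht0b, hu0c, hd0⟩ := hwit
  have ht0n : t0 < n := by omega
  have hmem : (if Nat.dist lam rho ≤ σ then 0 else (Nat.dist lam rho - σ + 1) / 2)
      ∈ {m : ℕ | ∃ u v : Fin n,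
        ((u : ℕ) = (n - 1) / 2 ∨ (u : ℕ) = n / 2) ∧
        ((g v : ℕ) = (k - 1) / 2 ∨ (g v : ℕ) = k / 2) ∧
        Nat.dist (u : ℕ) (v : ℕ) = m} :=
    ⟨⟨u0, hu0n⟩, ⟨t0, ht0n⟩, hu0c, hvb t0 ht0n ht0a ht0b, hd0⟩
  refine le_antisymm (Nat.sInf_le hmem) (le_csInf ⟨_, hmem⟩ ?_)
  rintro m ⟨u, v, hu, hv, hd⟩
  obtain ⟨h1, h2⟩ := hva v hv
  rw [hdist] at hd
  rcases le_or_gt (Nat.dist lam rho) σ with hc | hc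
  · rw [if_pos hc]; omega
  · rw [if_neg (not_le.mpr hc)]
    rw [hdist] at hc ⊢
    omega
end

section
/- The median of a vertex-weighted finite tree with positive weights consists of either a single vertex or two adjacent vertices; that is, any two vertices achieving the minimum weighted distance-sum ds^w are adjacent. -/
/-!
Let `x` and `y` be medians at distance `L ≥ 2` and let `z` be the neighbour of `x` on the path
to `y`. Removing the edge `xz` splits the tree into an `x`-side and a `z`-side. A vertex `u` on the
`x`-side has `d(y,u) - d(x,u) = L = L (d(z,u) - d(x,u))`, because its path to `y` runs through `x`;
a vertex on the `z`-side has `d(y,u) - d(x,u) ≥ -L = L (d(z,u) - d(x,u))`, strictly so for `u = z`.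
Summing against the positive weights gives `ds(y) - ds(x) > L (ds(z) - ds(x)) ≥ 0`, as `x` is a
median, contradicting the minimality of `ds(y)`.
-/

namespace SimpleGraph

variable {V : Type*} {G : SimpleGraph V}

/-- The weighted distance-sum `ds^w(v)`. -/
noncomputable def weightedDistSum [Fintype V] (G : SimpleGraph V) (f : V → ℝ) (v : V) : ℝ :=
  ∑ u, (G.dist v u : ℝ) * f u

lemma Walk.dist_add_dist_of_length_eq_dist {u v w : V} {p : G.Walk u w}
    (hp : p.length = G.dist u w) (hv : v ∈ p.support) :
    G.dist u v + G.dist v w = G.dist u w := by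
  obtain ⟨q, r, rfl⟩ := Walk.mem_support_iff_exists_append.mp hv
  have htri := q.reachable.dist_triangle_left w
  have hq := dist_le q
  have hr := dist_le r
  rw [Walk.length_append] at hp
  omega

lemma IsAcyclic.length_eq_dist_of_isPath (hG : G.IsAcyclic) {u v : V} {p : G.Walk u v}
    (hp : p.IsPath) : p.length = G.dist u v := by
  obtain ⟨q, hq, hlen⟩ := p.reachable.exists_path_of_dist
  have : p = q := congrArg Subtype.val ((hG.subsingleton_path u v).elim ⟨p, hp⟩ ⟨q, hq⟩)
  rw [this, hlen]

lemma Connected.exists_adj_dist_eq_add_one (hG : G.Connected) {u v : V} (huv : u ≠ v) :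
    ∃ w, G.Adj u w ∧ G.dist u v = G.dist w v + 1 := by
  obtain ⟨p, hp⟩ := hG.exists_walk_length_eq_dist u v
  cases p with
  | nil => exact absurd rfl huv
  | @cons _ w _ hadj q =>
    have hwv := dist_le q
    have huwv : G.dist u v ≤ G.dist u w + G.dist w v := hG.dist_triangle
    rw [Walk.length_cons] at hp
    rw [dist_eq_one_iff_adj.mpr hadj] at huwv
    exact ⟨w, hadj, by omega⟩

lemma IsTree.dist_eq_dist_add_dist_of_adj (hG : G.IsTree) {x z u v : V} (hxz : G.Adj x z)
    (hu : G.dist u z = G.dist u x + 1) (hv : G.dist x v = G.dist z v + 1) :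
    G.dist u v = G.dist u x + G.dist x v := by
  obtain ⟨p, hp⟩ := hG.connected.exists_walk_length_eq_dist u x
  obtain ⟨q, hq⟩ := hG.connected.exists_walk_length_eq_dist z v
  have hpath : (p.append (.cons hxz q)).IsPath := by
    rw [Walk.isPath_def, Walk.support_append, Walk.support_cons, List.tail_cons]
    refine (p.isPath_of_length_eq_dist hp).support_nodup.append
      (q.isPath_of_length_eq_dist hq).support_nodup fun c hcp hcq => ?_
    -- a common vertex `c` would be strictly closer to `x` than to `z`, and vice versa
    have hpc := Walk.dist_add_dist_of_length_eq_dist hp hcp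
    have hqc := Walk.dist_add_dist_of_length_eq_dist hq hcq
    have huz : G.dist u z ≤ G.dist u c + G.dist c z := hG.connected.dist_triangle
    have hxv : G.dist x v ≤ G.dist x c + G.dist c v := hG.connected.dist_triangle
    have hcx : G.dist c x = G.dist x c := dist_comm
    have hcz : G.dist c z = G.dist z c := dist_comm
    omega
  have hlen := hG.isAcyclic.length_eq_dist_of_isPath hpath
  rw [Walk.length_append, Walk.length_cons, hp, hq] at hlen
  omega

lemma IsTree.mul_sub_le_dist_sub_dist (hG : G.IsTree) {x y z : V} (hxz : G.Adj x z)
    (hy : G.dist x y = G.dist z y + 1) (u : V) :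
    (G.dist x y : ℝ) * (G.dist z u - G.dist x u) ≤ G.dist y u - G.dist x u := by
  rw [dist_comm (u := x) (v := u), dist_comm (u := z), dist_comm (u := y)]
  rcases hG.dist_eq_dist_add_one_of_adj u hxz with hz_side | hx_side
  · have hxuy : G.dist u x ≤ G.dist u y + G.dist y x := hG.connected.dist_triangle
    rw [dist_comm (u := y), hz_side] at hxuy
    rw [hz_side]
    push_cast
    have : ((G.dist u z + 1 : ℕ) : ℝ) ≤ G.dist u y + G.dist x y := mod_cast hxuy
    push_cast at this
    linarith
  · rw [hx_side, hG.dist_eq_dist_add_dist_of_adj hxz hx_side hy]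
    push_cast
    linarith

lemma IsTree.weightedDistSum_lt_of_adj [Fintype V] (hG : G.IsTree) {f : V → ℝ}
    (hf : ∀ v, 0 < f v) {x y z : V} (hxz : G.Adj x z) (hy : G.dist x y = G.dist z y + 1)
    (hyz : y ≠ z) (hmin : G.weightedDistSum f x ≤ G.weightedDistSum f z) :
    G.weightedDistSum f x < G.weightedDistSum f y := by
  have hzy : (1 : ℝ) ≤ G.dist z y := by exact_mod_cast hG.connected.pos_dist_of_ne hyz.symm
  have hkey : G.dist x y * (G.weightedDistSum f z - G.weightedDistSum f x)
      < G.weightedDistSum f y - G.weightedDistSum f x := by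
    simp only [weightedDistSum, ← Finset.sum_sub_distrib, Finset.mul_sum, ← sub_mul, ← mul_assoc]
    refine Finset.sum_lt_sum (fun u _ => ?_) ⟨z, Finset.mem_univ z, ?_⟩
    · exact mul_le_mul_of_nonneg_right (hG.mul_sub_le_dist_sub_dist hxz hy u) (hf u).le
    · -- at `u = z` the pointwise bound reads `-L < L - 2`
      refine mul_lt_mul_of_pos_right ?_ (hf z)
      rw [dist_self, dist_comm (u := y), hy, dist_eq_one_iff_adj.mpr hxz]
      push_cast
      linarith
  have hnonneg := mul_nonneg (Nat.cast_nonneg (α := ℝ) (G.dist x y)) (sub_nonneg.mpr hmin)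
  linarith

end SimpleGraph

/-- The median of a vertex-weighted finite tree with positive weights consists
of a single vertex or two adjacent vertices: any two distinct vertices that
both minimize the weighted distance-sum are adjacent. -/
theorem vertex_weighted_tree_median_adjacent {V : Type*} [Fintype V]
    (T : SimpleGraph V) (hT : T.IsTree) (f : V → ℝ) (hf : ∀ v, 0 < f v)
    (x y : V)
    (hx : ∀ v : V, ∑ u : V, (T.dist x u : ℝ) * f u ≤ ∑ u : V, (T.dist v u : ℝ) * f u)
    (hy : ∀ v : V, ∑ u : V, (T.dist y u : ℝ) * f u ≤ ∑ u : V, (T.dist v u : ℝ) * f u)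
    (hne : x ≠ y) :
    T.Adj x y := by
  by_contra hadj
  obtain ⟨z, hxz, hzy⟩ := hT.connected.exists_adj_dist_eq_add_one hne
  have hyz : y ≠ z := fun hyz => hadj (hyz ▸ hxz)
  exact (hy x).not_gt (hT.weightedDistSum_lt_of_adj hf hxz hzy hyz (hx z))
end
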